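/- arXiv:2603.08731 — 5 statements merged into one kernel-verified Lean document; each statement's English description precedes it below -/
import Mathlib

section
/- Along trajectories of the co-rotating-frame Kuramoto dynamics, the oscillatory energy satisfies the exact dissipation identity d/dt V_θ(θ(t)) = −N C₀ r(θ(t)) ∑_{i=1}^N ((K/N) ∑_{j=1}^N sin(θ_i(t) − θ_j(t)))² for every t ∈ ℝ; in particular d/dt V_θ(θ(t)) ≤ 0. -/
/-- Oscillatory energy `V_θ(θ) = -(K/(2N)) ∑_{i,j} cos(θ_i - θ_j)`. -/
noncomputable def Vtheta (N : ℕ) (K : ℝ) (θ : Fin N → ℝ) : ℝ :=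
  -(K / (2 * N)) * ∑ i, ∑ j, Real.cos (θ i - θ j)

/-- Order parameter `r(θ) = |(1/N) ∑_j exp(i θ_j)|`. -/
noncomputable def orderParam (N : ℕ) (θ : Fin N → ℝ) : ℝ :=
  ‖(N : ℂ)⁻¹ * ∑ j, Complex.exp ((θ j : ℂ) * Complex.I)‖

/-- exact dissipation identity for the oscillatory energy along
co-rotating-frame Kuramoto trajectories, and nonpositivity of the derivative. -/
theorem stmt_1 (N : ℕ) (hN : 1 ≤ N) (K : ℝ) (hK : 0 < K) (C₀ : ℝ) (hC₀ : 0 ≤ C₀)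
    (θ : ℝ → Fin N → ℝ)
    (hdyn : ∀ i t, HasDerivAt (fun t' => θ t' i)
      (K * C₀ * orderParam N (θ t) * ∑ j, Real.sin (θ t j - θ t i)) t)
    (t : ℝ) :
    HasDerivAt (fun t' => Vtheta N K (θ t'))
      (-(N * C₀ * orderParam N (θ t) *
        ∑ i, ((K / N) * ∑ j, Real.sin (θ t i - θ t j)) ^ 2)) t ∧
    -(N * C₀ * orderParam N (θ t) *
        ∑ i, ((K / N) * ∑ j, Real.sin (θ t i - θ t j)) ^ 2) ≤ 0 := by
  have hNR : (N : ℝ) ≠ 0 := by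
    have : (0:ℝ) < N := by exact_mod_cast Nat.lt_of_lt_of_le Nat.zero_lt_one hN
    exact ne_of_gt this
  set r := orderParam N (θ t) with hr
  have hr0 : 0 ≤ r := norm_nonneg _
  set S : Fin N → ℝ := fun i => ∑ j, Real.sin (θ t i - θ t j) with hS
  set D : Fin N → ℝ := fun i => K * C₀ * r * ∑ j, Real.sin (θ t j - θ t i) with hD
  have hDS : ∀ i, D i = -(K * C₀ * r) * S i := by
    intro i
    have : (∑ j, Real.sin (θ t j - θ t i)) = -∑ j, Real.sin (θ t i - θ t j) := by
      rw [← Finset.sum_neg_distrib]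
      exact Finset.sum_congr rfl fun j _ => by rw [← Real.sin_neg, neg_sub]
    simp only [hD, this, hS]; ring
  constructor
  · have h1 : HasDerivAt (fun t' => ∑ i, ∑ j, Real.cos (θ t' i - θ t' j))
        (∑ i, ∑ j, (-Real.sin (θ t i - θ t j)) * (D i - D j)) t := by
      apply HasDerivAt.fun_sum; intro i _
      apply HasDerivAt.fun_sum; intro j _
      exact ((hdyn i t).sub (hdyn j t)).cos
    have h2 := h1.const_mul (-(K / (2 * N)))
    have key : ∑ i, ∑ j, (-Real.sin (θ t i - θ t j)) * (D i - D j)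
        = ∑ i, 2 * (K * C₀ * r) * (S i) ^ 2 := by
      have hsplit : ∀ i j, (-Real.sin (θ t i - θ t j)) * (D i - D j)
          = (-Real.sin (θ t i - θ t j)) * D i + Real.sin (θ t i - θ t j) * D j := by
        intro i j; ring
      simp only [hsplit, Finset.sum_add_distrib]
      have hA : ∑ i, ∑ j, (-Real.sin (θ t i - θ t j)) * D i
          = ∑ i, (-(S i)) * D i := by
        refine Finset.sum_congr rfl fun i _ => ?_
        rw [← Finset.sum_mul, ← Finset.sum_neg_distrib]
      have hB : ∑ i, ∑ j, Real.sin (θ t i - θ t j) * D j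
          = ∑ j, (-(S j)) * D j := by
        rw [Finset.sum_comm]
        refine Finset.sum_congr rfl fun j _ => ?_
        rw [← Finset.sum_mul]
        congr 1
        rw [← Finset.sum_neg_distrib]
        exact Finset.sum_congr rfl fun i _ => by rw [← Real.sin_neg, neg_sub]
      rw [hA, hB, ← Finset.sum_add_distrib]
      refine Finset.sum_congr rfl fun i _ => ?_
      rw [hDS i]; ring
    refine h2.congr_deriv (Eq.symm ?_)
    rw [key, Finset.mul_sum, ← Finset.sum_neg_distrib, Finset.mul_sum]
    refine Finset.sum_congr rfl fun i _ => ?_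
    have : ((K / ↑N) * S i) ^ 2 = K ^ 2 / (N:ℝ) ^ 2 * (S i) ^ 2 := by ring
    rw [this]
    field_simp
  · apply neg_nonpos_of_nonneg
    apply mul_nonneg
    · apply mul_nonneg (mul_nonneg (Nat.cast_nonneg N) hC₀) hr0
    · exact Finset.sum_nonneg fun i _ => sq_nonneg _
end

section
/- (Lemma 1, Lyapunov decrease along fast dynamics.) Along trajectories of the co-rotating-frame Kuramoto dynamics, the oscillatory energy is non-increasing: for all s ≤ t, V_θ(θ(t)) ≤ V_θ(θ(s)). -/
lemma double_sum_sin (N : ℕ) (x : Fin N → ℝ) :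
    ∑ i, ∑ j, Real.sin (x i - x j) *
      ((∑ k, Real.sin (x i - x k)) - ∑ k, Real.sin (x j - x k))
    = 2 * ∑ i, (∑ k, Real.sin (x i - x k))^2 := by
  set S : Fin N → ℝ := fun i => ∑ k, Real.sin (x i - x k) with hS
  have hanti : ∀ j : Fin N, ∑ i, Real.sin (x i - x j) = -S j := by
    intro j
    rw [hS]
    simp only [← Finset.sum_neg_distrib, ← Real.sin_neg, neg_sub]
  have h1 : ∑ i, ∑ j, Real.sin (x i - x j) * S i = ∑ i, S i ^ 2 := by
    refine Finset.sum_congr rfl fun i _ => ?_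
    rw [← Finset.sum_mul, sq]
  have h2 : ∑ i, ∑ j, Real.sin (x i - x j) * S j = -∑ i, S i ^ 2 := by
    rw [Finset.sum_comm, ← Finset.sum_neg_distrib]
    refine Finset.sum_congr rfl fun j _ => ?_
    rw [← Finset.sum_mul, hanti j, sq]
    ring
  calc ∑ i, ∑ j, Real.sin (x i - x j) * (S i - S j)
      = (∑ i, ∑ j, Real.sin (x i - x j) * S i)
        - ∑ i, ∑ j, Real.sin (x i - x j) * S j := by
        simp only [mul_sub, Finset.sum_sub_distrib]
    _ = 2 * ∑ i, S i ^ 2 := by rw [h1, h2]; ring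

/-- Lemma 1, Lyapunov decrease along fast dynamics: the oscillatory
energy is non-increasing along co-rotating-frame Kuramoto trajectories. -/
theorem stmt_2 (N : ℕ) (hN : 1 ≤ N) (K : ℝ) (hK : 0 < K) (C₀ : ℝ) (hC₀ : 0 ≤ C₀)
    (θ : ℝ → Fin N → ℝ)
    (hdyn : ∀ i t, HasDerivAt (fun t' => θ t' i)
      (K * C₀ * orderParam N (θ t) * ∑ j, Real.sin (θ t j - θ t i)) t)
    (s t : ℝ) (hst : s ≤ t) :
    Vtheta N K (θ t) ≤ Vtheta N K (θ s) := by
  set f : ℝ → ℝ := fun t' => Vtheta N K (θ t') with hf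
  set d : ℝ → Fin N → ℝ := fun u i =>
    K * C₀ * orderParam N (θ u) * ∑ j, Real.sin (θ u j - θ u i) with hd
  set E : ℝ → ℝ := fun u =>
    -(K / (2 * N)) * ∑ i, ∑ j, (-Real.sin (θ u i - θ u j)) * (d u i - d u j) with hE
  have hderiv : ∀ u : ℝ, HasDerivAt f (E u) u := by
    intro u
    have hsum : HasDerivAt (fun t' => ∑ i, ∑ j, Real.cos (θ t' i - θ t' j))
        (∑ i, ∑ j, (-Real.sin (θ u i - θ u j)) * (d u i - d u j)) u := by
      refine HasDerivAt.fun_sum fun i _ => HasDerivAt.fun_sum fun j _ => ?_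
      exact ((hdyn i u).sub (hdyn j u)).cos
    have h2 := hsum.const_mul (-(K / (2 * (N:ℝ))))
    have heq : E u = -(K / (2 * (N:ℝ))) *
        ∑ i, ∑ j, (-Real.sin (θ u i - θ u j)) * (d u i - d u j) := rfl
    rw [heq]
    exact h2
  have hEneg : ∀ u : ℝ, E u ≤ 0 := by
    intro u
    set c : ℝ := K * C₀ * orderParam N (θ u) with hc
    have hc0 : 0 ≤ c := by
      apply mul_nonneg (mul_nonneg hK.le hC₀)
      exact norm_nonneg _
    set S : Fin N → ℝ := fun i => ∑ k, Real.sin (θ u i - θ u k) with hS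
    have hdS : ∀ i, d u i = -(c * S i) := by
      intro i
      show c * (∑ j, Real.sin (θ u j - θ u i)) = -(c * ∑ k, Real.sin (θ u i - θ u k))
      have hneg : ∑ j, Real.sin (θ u j - θ u i) = -∑ k, Real.sin (θ u i - θ u k) := by
        simp only [← Finset.sum_neg_distrib, ← Real.sin_neg, neg_sub]
      rw [hneg]; ring
    have key : ∑ i, ∑ j, (-Real.sin (θ u i - θ u j)) * (d u i - d u j)
        = c * (2 * ∑ i, S i ^ 2) := by
      have := double_sum_sin N (θ u)
      calc ∑ i, ∑ j, (-Real.sin (θ u i - θ u j)) * (d u i - d u j)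
          = c * ∑ i, ∑ j, Real.sin (θ u i - θ u j) * (S i - S j) := by
            rw [Finset.mul_sum]
            refine Finset.sum_congr rfl fun i _ => ?_
            rw [Finset.mul_sum]
            refine Finset.sum_congr rfl fun j _ => ?_
            rw [hdS i, hdS j]; ring
        _ = c * (2 * ∑ i, S i ^ 2) := by rw [this]
    rw [hE]
    simp only
    rw [key]
    have hsumsq : 0 ≤ ∑ i, S i ^ 2 := Finset.sum_nonneg fun i _ => sq_nonneg _
    have hN0 : (0:ℝ) < N := by exact_mod_cast hN
    have : 0 ≤ K / (2 * N) := by positivity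
    nlinarith [mul_nonneg hc0 hsumsq, mul_nonneg this (mul_nonneg hc0 hsumsq)]
  have hmono : Antitone f := by
    apply antitone_of_deriv_nonpos
    · exact fun u => (hderiv u).differentiableAt
    · intro u; rw [(hderiv u).deriv]; exact hEneg u
  exact hmono hst
end

section
/- (Perturbed Lyapunov decrease with non-identical frequencies.) Suppose differentiable functions θ_i : ℝ → ℝ satisfy θ_i'(t) = ω_i + K C₀ r(θ(t)) ∑_{j=1}^N sin(θ_j(t) − θ_i(t)) for all i and t, where C₀ ≥ 0 and the intrinsic frequencies satisfy |ω_i| ≤ Δω for all i. Let g(t) denote the Euclidean norm of the gradient of V_θ at θ(t), i.e. g(t)² = ∑_{i=1}^N ((K/N) ∑_{j=1}^N sin(θ_i(t) − θ_j(t)))². Then for all t, d/dt V_θ(θ(t)) ≤ √N · Δω · g(t) − N C₀ r(θ(t)) g(t)². -/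
/-- Euclidean norm of the gradient of `V_θ` at `θ(t)`. -/
noncomputable def gradNorm (N : ℕ) (K : ℝ) (θ : Fin N → ℝ) : ℝ :=
  Real.sqrt (∑ i, ((K / N) * ∑ j, Real.sin (θ i - θ j)) ^ 2)

/-- perturbed Lyapunov decrease with non-identical frequencies:
`d/dt V_θ(θ(t)) ≤ √N · Δω · g(t) − N C₀ r(θ(t)) g(t)²`. -/
theorem stmt_4 (N : ℕ) (hN : 1 ≤ N) (K : ℝ) (hK : 0 < K) (C₀ : ℝ) (hC₀ : 0 ≤ C₀)
    (ω : Fin N → ℝ) (Δω : ℝ) (hω : ∀ i, |ω i| ≤ Δω)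
    (θ : ℝ → Fin N → ℝ)
    (hdyn : ∀ i t, HasDerivAt (fun t' => θ t' i)
      (ω i + K * C₀ * orderParam N (θ t) * ∑ j, Real.sin (θ t j - θ t i)) t)
    (t : ℝ) :
    deriv (fun t' => Vtheta N K (θ t')) t ≤
      Real.sqrt N * Δω * gradNorm N K (θ t)
        - N * C₀ * orderParam N (θ t) * (gradNorm N K (θ t)) ^ 2 := by
  classical
  have hNpos : (0:ℝ) < N := by exact_mod_cast hN
  set r : ℝ := orderParam N (θ t) with hr
  have hr0 : 0 ≤ r := norm_nonneg _
  set v : Fin N → ℝ := fun i => ω i + K * C₀ * r * ∑ j, Real.sin (θ t j - θ t i) with hv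
  set G : Fin N → ℝ := fun i => (K / N) * ∑ j, Real.sin (θ t i - θ t j) with hG
  -- derivative of V along trajectory
  have hD : HasDerivAt (fun t' => Vtheta N K (θ t'))
      (-(K / (2 * N)) * ∑ i, ∑ j, -Real.sin (θ t i - θ t j) * (v i - v j)) t := by
    simp only [Vtheta]
    apply HasDerivAt.const_mul
    apply HasDerivAt.fun_sum
    intro i _
    apply HasDerivAt.fun_sum
    intro j _
    have h1 : HasDerivAt (fun t' => θ t' i - θ t' j) (v i - v j) t :=
      (hdyn i t).sub (hdyn j t)
    simpa [mul_comm, Function.comp_def] using (Real.hasDerivAt_cos (θ t i - θ t j)).comp t h1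
  -- rewrite the derivative as ∑ G i * v i
  have hsum : (-(K / (2 * N)) * ∑ i, ∑ j, -Real.sin (θ t i - θ t j) * (v i - v j))
      = ∑ i, G i * v i := by
    have hswap : ∑ i, ∑ j, Real.sin (θ t i - θ t j) * v j
        = -∑ i, ∑ j, Real.sin (θ t i - θ t j) * v i := by
      rw [Finset.sum_comm]
      rw [← Finset.sum_neg_distrib]
      refine Finset.sum_congr rfl fun j _ => ?_
      rw [← Finset.sum_neg_distrib]
      refine Finset.sum_congr rfl fun i _ => ?_
      rw [show θ t i - θ t j = -(θ t j - θ t i) by ring, Real.sin_neg]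
      ring
    have : ∑ i, ∑ j, -Real.sin (θ t i - θ t j) * (v i - v j)
        = -2 * ∑ i, v i * ∑ j, Real.sin (θ t i - θ t j) := by
      have expand : ∀ i : Fin N, ∑ j, -Real.sin (θ t i - θ t j) * (v i - v j)
          = -(v i * ∑ j, Real.sin (θ t i - θ t j)) + ∑ j, Real.sin (θ t i - θ t j) * v j := by
        intro i
        rw [Finset.mul_sum, neg_add_eq_sub, ← Finset.sum_sub_distrib]
        exact Finset.sum_congr rfl fun j _ => by ring
      rw [Finset.sum_congr rfl fun i _ => expand i, Finset.sum_add_distrib, hswap]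
      rw [Finset.sum_neg_distrib]
      have : ∑ i, ∑ j, Real.sin (θ t i - θ t j) * v i
          = ∑ i, v i * ∑ j, Real.sin (θ t i - θ t j) := by
        refine Finset.sum_congr rfl fun i _ => ?_
        rw [Finset.mul_sum]
        exact Finset.sum_congr rfl fun j _ => mul_comm _ _
      rw [this]; ring
    rw [this]
    have hNne : (N:ℝ) ≠ 0 := ne_of_gt hNpos
    calc -(K / (2 * ↑N)) * (-2 * ∑ i, v i * ∑ j, Real.sin (θ t i - θ t j))
        = (K / ↑N) * ∑ i, v i * ∑ j, Real.sin (θ t i - θ t j) := by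
          field_simp
      _ = ∑ i, G i * v i := by
          rw [Finset.mul_sum]
          refine Finset.sum_congr rfl fun i _ => ?_
          simp only [hG]; ring
  have hderiv : deriv (fun t' => Vtheta N K (θ t')) t = ∑ i, G i * v i := by
    rw [hD.deriv, hsum]
  rw [hderiv]
  -- split into frequency part and damping part
  have hsplit : ∑ i, G i * v i = (∑ i, G i * ω i) - N * C₀ * r * ∑ i, (G i) ^ 2 := by
    rw [Finset.mul_sum, ← Finset.sum_sub_distrib]
    refine Finset.sum_congr rfl fun i _ => ?_
    have hsinneg : ∑ j, Real.sin (θ t j - θ t i) = -∑ j, Real.sin (θ t i - θ t j) := by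
      rw [← Finset.sum_neg_distrib]
      exact Finset.sum_congr rfl fun j _ => by
        rw [show θ t j - θ t i = -(θ t i - θ t j) by ring, Real.sin_neg]
    simp only [hv, hG, hsinneg]
    field_simp
    ring
  rw [hsplit]
  have hg2 : (gradNorm N K (θ t)) ^ 2 = ∑ i, (G i) ^ 2 := by
    rw [gradNorm, Real.sq_sqrt (Finset.sum_nonneg fun i _ => sq_nonneg _)]
  rw [hg2]
  have hcs : ∑ i, G i * ω i ≤ Real.sqrt N * Δω * gradNorm N K (θ t) := by
    calc ∑ i, G i * ω i ≤ Real.sqrt (∑ i : Fin N, (ω i) ^ 2) * Real.sqrt (∑ i, (G i) ^ 2) := by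
          have := Real.sum_mul_le_sqrt_mul_sqrt Finset.univ ω G
          calc ∑ i, G i * ω i = ∑ i, ω i * G i :=
                Finset.sum_congr rfl fun i _ => mul_comm _ _
            _ ≤ _ := this
      _ ≤ Real.sqrt N * Δω * gradNorm N K (θ t) := by
          have hΔ : 0 ≤ Δω := le_trans (abs_nonneg _) (hω ⟨0, hN⟩)
          have h1 : Real.sqrt (∑ i : Fin N, (ω i) ^ 2) ≤ Real.sqrt N * Δω := by
            have : ∑ i : Fin N, (ω i) ^ 2 ≤ N * Δω ^ 2 := by
              calc ∑ i : Fin N, (ω i) ^ 2 ≤ ∑ _i : Fin N, Δω ^ 2 :=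
                    Finset.sum_le_sum fun i _ => by
                      rw [← sq_abs]; exact pow_le_pow_left₀ (abs_nonneg _) (hω i) 2
                _ = N * Δω ^ 2 := by simp [mul_comm]
            calc Real.sqrt (∑ i : Fin N, (ω i) ^ 2) ≤ Real.sqrt (N * Δω ^ 2) :=
                  Real.sqrt_le_sqrt this
              _ = Real.sqrt N * Δω := by
                  rw [Real.sqrt_mul (le_of_lt hNpos), Real.sqrt_sq hΔ]
          have h2 : Real.sqrt (∑ i, (G i) ^ 2) = gradNorm N K (θ t) := by
            rw [gradNorm]
          rw [h2]
          exact mul_le_mul_of_nonneg_right h1 (Real.sqrt_nonneg _)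
  linarith [hcs]
end

section
/- (Lemma 2, ultimate boundedness of the slow dynamics.) Along trajectories of the slow Hebbian dynamics, the weight trajectory is ultimately bounded by η M² N / γ: limsup_{t→∞} ‖W(t)‖_F ≤ η M² N / γ. In particular, for every ε > 0 there exists T such that ‖W(t)‖_F ≤ η M² N / γ + ε for all t ≥ T. -/
open Filter

/-- Frobenius norm `‖W‖_F = (∑_{i,j} W_{ij}²)^{1/2}`. -/
noncomputable def frobNorm (N : ℕ) (W : Fin N → Fin N → ℝ) : ℝ :=
  Real.sqrt (∑ i, ∑ j, (W i j) ^ 2)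

/-- Scalar ultimate bound for `f' = -γ f + u`, `|u| ≤ C`. -/
lemma entry_bound (γ C : ℝ) (hγ : 0 < γ) (f u : ℝ → ℝ)
    (hu : ∀ t, |u t| ≤ C)
    (hf : ∀ t, HasDerivAt f (-γ * f t + u t) t) :
    ∀ t ≥ (0:ℝ), |f t| ≤ Real.exp (-γ * t) * |f 0| + C / γ := by
  have hC : 0 ≤ C := le_trans (abs_nonneg _) (hu 0)
  have hCg : 0 ≤ C / γ := div_nonneg hC hγ.le
  set h : ℝ → ℝ := fun t => Real.exp (γ * t) * f t with hh_def
  have hexp : ∀ t : ℝ, HasDerivAt (fun s => Real.exp (γ * s)) (γ * Real.exp (γ * t)) t := by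
    intro t
    have := ((hasDerivAt_id t).const_mul γ).exp
    simpa [mul_comm] using this
  have hh : ∀ t, HasDerivAt h (Real.exp (γ * t) * u t) t := by
    intro t
    have := (hexp t).fun_mul (hf t)
    exact this.congr_deriv (by ring)
  -- φ nonincreasing
  have hφ : ∀ t, HasDerivAt (fun s => h s - (C / γ) * Real.exp (γ * s))
      (Real.exp (γ * t) * u t - (C / γ) * (γ * Real.exp (γ * t))) t := by
    intro t; exact (hh t).sub ((hexp t).const_mul (C / γ))
  have hψ : ∀ t, HasDerivAt (fun s => h s + (C / γ) * Real.exp (γ * s))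
      (Real.exp (γ * t) * u t + (C / γ) * (γ * Real.exp (γ * t))) t := by
    intro t; exact (hh t).add ((hexp t).const_mul (C / γ))
  have hkey : ∀ t, (C / γ) * (γ * Real.exp (γ * t)) = C * Real.exp (γ * t) := by
    intro t; field_simp
  have hφanti : Antitone (fun s => h s - (C / γ) * Real.exp (γ * s)) := by
    apply antitone_of_deriv_nonpos
    · intro t; exact (hφ t).differentiableAt
    · intro t
      rw [(hφ t).deriv, hkey t, sub_nonpos]
      have : u t ≤ C := le_trans (le_abs_self _) (hu t)
      calc Real.exp (γ * t) * u t ≤ Real.exp (γ * t) * C :=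
            mul_le_mul_of_nonneg_left this (Real.exp_nonneg _)
        _ = C * Real.exp (γ * t) := mul_comm _ _
  have hψmono : Monotone (fun s => h s + (C / γ) * Real.exp (γ * s)) := by
    apply monotone_of_deriv_nonneg
    · intro t; exact (hψ t).differentiableAt
    · intro t
      rw [(hψ t).deriv, hkey t]
      have : -C ≤ u t := neg_le_of_abs_le (hu t)
      nlinarith [Real.exp_nonneg (γ * t), mul_le_mul_of_nonneg_left this (Real.exp_nonneg (γ * t))]
  intro t ht
  have h0 : h 0 = f 0 := by simp [hh_def]
  have e0 : Real.exp (γ * 0) = 1 := by simp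
  have h1 : h t - (C / γ) * Real.exp (γ * t) ≤ h 0 - (C / γ) * 1 := by
    have := hφanti ht; simpa [e0] using this
  have h2 : h 0 + (C / γ) * 1 ≤ h t + (C / γ) * Real.exp (γ * t) := by
    have := hψmono ht; simpa [e0] using this
  have hab : |h t| ≤ |f 0| + (C / γ) * Real.exp (γ * t) := by
    rw [abs_le]
    constructor
    · have := neg_abs_le (f 0)
      nlinarith
    · nlinarith [le_abs_self (f 0)]
  have hepos : (0:ℝ) < Real.exp (γ * t) := Real.exp_pos _
  have hft : |f t| = Real.exp (-γ * t) * |h t| := by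
    have : f t = Real.exp (-γ * t) * h t := by
      simp only [hh_def]
      rw [← mul_assoc, ← Real.exp_add]
      norm_num
    rw [this, abs_mul, abs_of_pos (Real.exp_pos _)]
  rw [hft]
  have hmul : Real.exp (-γ * t) * |h t| ≤
      Real.exp (-γ * t) * (|f 0| + (C / γ) * Real.exp (γ * t)) :=
    mul_le_mul_of_nonneg_left hab (Real.exp_nonneg _)
  have hee : Real.exp (-γ * t) * Real.exp (γ * t) = 1 := by
    rw [← Real.exp_add]; simp
  calc Real.exp (-γ * t) * |h t|
      ≤ Real.exp (-γ * t) * (|f 0| + (C / γ) * Real.exp (γ * t)) := hmul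
    _ = Real.exp (-γ * t) * |f 0| + (C / γ) * (Real.exp (-γ * t) * Real.exp (γ * t)) := by ring
    _ = Real.exp (-γ * t) * |f 0| + C / γ := by rw [hee, mul_one]

/-- Frobenius norm bound from entrywise bounds. -/
lemma frob_le (N : ℕ) (W : Fin N → Fin N → ℝ) (B : ℝ) (hB : 0 ≤ B)
    (h : ∀ i j, |W i j| ≤ B) : frobNorm N W ≤ N * B := by
  unfold frobNorm
  have h1 : ∑ i, ∑ j, (W i j) ^ 2 ≤ ∑ _i : Fin N, ∑ _j : Fin N, B ^ 2 := by
    apply Finset.sum_le_sum; intro i _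
    apply Finset.sum_le_sum; intro j _
    calc (W i j) ^ 2 = |W i j| ^ 2 := (sq_abs _).symm
      _ ≤ B ^ 2 := pow_le_pow_left₀ (abs_nonneg _) (h i j) 2
  have h2 : ∑ _i : Fin N, ∑ _j : Fin N, B ^ 2 = (N * B) ^ 2 := by
    simp [Finset.sum_const, Finset.card_univ]; ring
  calc Real.sqrt (∑ i, ∑ j, (W i j) ^ 2) ≤ Real.sqrt ((N * B) ^ 2) := by
        rw [← h2]; exact Real.sqrt_le_sqrt h1
    _ = N * B := Real.sqrt_sq (by positivity)

/-- Lemma 2, ultimate boundedness of the slow dynamics: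
`limsup_{t→∞} ‖W(t)‖_F ≤ η M² N / γ`, and for every `ε > 0` there is `T` with
`‖W(t)‖_F ≤ η M² N / γ + ε` for all `t ≥ T`. -/
theorem stmt_12 (N : ℕ) (hN : 1 ≤ N) (γ η M : ℝ)
    (hγ : 0 < γ) (hη : 0 < η) (hM : 0 < M)
    (W : ℝ → Fin N → Fin N → ℝ) (x : ℝ → Fin N → ℝ) (g : ℝ → ℝ)
    (hx : ∀ i t, |x t i| ≤ M) (hg : ∀ t, 0 ≤ g t ∧ g t ≤ 1)
    (hdyn : ∀ i j t, HasDerivAt (fun t' => W t' i j)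
      (-γ * W t i j + η * x t i * x t j * g t) t) :
    limsup (fun t => frobNorm N (W t)) atTop ≤ η * M ^ 2 * N / γ ∧
    ∀ ε > 0, ∃ T : ℝ, ∀ t ≥ T, frobNorm N (W t) ≤ η * M ^ 2 * N / γ + ε := by
  set C : ℝ := η * M ^ 2 with hC_def
  have hC : 0 < C := by positivity
  -- entrywise perturbation bound
  have hub : ∀ i j t, |η * x t i * x t j * g t| ≤ C := by
    intro i j t
    have hgt := hg t
    have h1 : |η * x t i * x t j * g t| = η * |x t i| * |x t j| * |g t| := by
      rw [abs_mul, abs_mul, abs_mul, abs_of_pos hη]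
    rw [h1]
    have hgabs : |g t| ≤ 1 := abs_le.mpr ⟨by linarith [hgt.1], hgt.2⟩
    have hxi := hx i t
    have hxj := hx j t
    have hstep : η * |x t i| * |x t j| * |g t| ≤ η * M * M * 1 := by
      gcongr <;> first | exact hx i t | exact hx j t | exact hgabs
    calc η * |x t i| * |x t j| * |g t| ≤ η * M * M * 1 := hstep
      _ = C := by rw [hC_def]; ring
  have hentry : ∀ i j, ∀ t ≥ (0:ℝ),
      |W t i j| ≤ Real.exp (-γ * t) * |W 0 i j| + C / γ := by
    intro i j
    exact entry_bound γ C hγ (fun t => W t i j) (fun t => η * x t i * x t j * g t)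
      (hub i j) (hdyn i j)
  -- uniform initial bound
  set A : ℝ := ∑ i, ∑ j, |W 0 i j| with hA_def
  have hA0 : 0 ≤ A := Finset.sum_nonneg fun i _ => Finset.sum_nonneg fun j _ => abs_nonneg _
  have hAij : ∀ i j, |W 0 i j| ≤ A := by
    intro i j
    calc |W 0 i j| ≤ ∑ j', |W 0 i j'| :=
          Finset.single_le_sum (f := fun j' => |W 0 i j'|)
            (fun j' _ => abs_nonneg _) (Finset.mem_univ j)
      _ ≤ A := Finset.single_le_sum (f := fun i' => ∑ j', |W 0 i' j'|)
          (fun i' _ => Finset.sum_nonneg fun j' _ => abs_nonneg _) (Finset.mem_univ i)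
  have hfrob : ∀ t ≥ (0:ℝ), frobNorm N (W t) ≤
      N * (Real.exp (-γ * t) * A + C / γ) := by
    intro t ht
    apply frob_le
    · positivity
    · intro i j
      calc |W t i j| ≤ Real.exp (-γ * t) * |W 0 i j| + C / γ := hentry i j t ht
        _ ≤ Real.exp (-γ * t) * A + C / γ := by
            have := mul_le_mul_of_nonneg_left (hAij i j) (Real.exp_nonneg (-γ * t))
            linarith
  have hLeq : (N : ℝ) * (C / γ) = η * M ^ 2 * N / γ := by
    rw [hC_def]; ring
  -- tendsto of the transient term
  have htend : Tendsto (fun t : ℝ => (N : ℝ) * (Real.exp (-γ * t) * A)) atTop (nhds 0) := by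
    have h1 : Tendsto (fun t : ℝ => Real.exp (-γ * t)) atTop (nhds 0) := by
      have : Tendsto (fun t : ℝ => -γ * t) atTop atBot :=
        Tendsto.const_mul_atTop_of_neg (neg_neg_iff_pos.mpr hγ) tendsto_id
      exact Real.tendsto_exp_atBot.comp this
    have := (h1.mul_const A).const_mul (N : ℝ)
    simpa using this
  have hpart2 : ∀ ε > 0, ∃ T : ℝ, ∀ t ≥ T, frobNorm N (W t) ≤ η * M ^ 2 * N / γ + ε := by
    intro ε hε
    have hev : ∀ᶠ t in atTop, (N : ℝ) * (Real.exp (-γ * t) * A) < ε :=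
      htend.eventually_lt_const hε
    rw [eventually_atTop] at hev
    obtain ⟨T₀, hT₀⟩ := hev
    refine ⟨max T₀ 0, fun t ht => ?_⟩
    have ht0 : (0:ℝ) ≤ t := le_trans (le_max_right _ _) ht
    have htT : T₀ ≤ t := le_trans (le_max_left _ _) ht
    calc frobNorm N (W t) ≤ N * (Real.exp (-γ * t) * A + C / γ) := hfrob t ht0
      _ = (N : ℝ) * (Real.exp (-γ * t) * A) + N * (C / γ) := by ring
      _ ≤ ε + (η * M ^ 2 * N / γ) := by
          rw [hLeq]; linarith [hT₀ t htT]
      _ = η * M ^ 2 * N / γ + ε := by ring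
  refine ⟨?_, hpart2⟩
  -- limsup part
  apply le_of_forall_pos_le_add
  intro ε hε
  obtain ⟨T, hT⟩ := hpart2 ε hε
  have hev : ∀ᶠ t in atTop, frobNorm N (W t) ≤ η * M ^ 2 * N / γ + ε :=
    eventually_atTop.mpr ⟨T, hT⟩
  apply limsup_le_of_le _ hev
  have hbdd : IsBoundedUnder (· ≥ ·) atTop (fun t => frobNorm N (W t)) :=
    isBoundedUnder_of ⟨0, fun t => Real.sqrt_nonneg _⟩
  exact hbdd.isCoboundedUnder_le
end

section
/- (Forward invariance of the attracting ball.) Along trajectories of the slow Hebbian dynamics, the ball {W : ‖W‖_F ≤ η M² N / γ} is forward invariant: if ‖W(t₀)‖_F ≤ η M² N / γ for some t₀, then ‖W(t)‖_F ≤ η M² N / γ for all t ≥ t₀. -/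
/-- forward invariance of the attracting ball `‖W‖_F ≤ η M² N / γ`. -/
theorem stmt_13 (N : ℕ) (hN : 1 ≤ N) (γ η M : ℝ)
    (hγ : 0 < γ) (hη : 0 < η) (hM : 0 < M)
    (W : ℝ → Fin N → Fin N → ℝ) (x : ℝ → Fin N → ℝ) (g : ℝ → ℝ)
    (hx : ∀ i t, |x t i| ≤ M) (hg : ∀ t, 0 ≤ g t ∧ g t ≤ 1)
    (hdyn : ∀ i j t, HasDerivAt (fun t' => W t' i j)
      (-γ * W t i j + η * x t i * x t j * g t) t)
    (t₀ : ℝ) (h₀ : frobNorm N (W t₀) ≤ η * M ^ 2 * N / γ)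
    (t : ℝ) (ht : t₀ ≤ t) :
    frobNorm N (W t) ≤ η * M ^ 2 * N / γ := by
  set R : ℝ := η * M ^ 2 * N / γ with hRdef
  have hγR : γ * R = η * M ^ 2 * N := by rw [hRdef]; field_simp
  let L : (Fin N × Fin N → ℝ) ≃L[ℝ] EuclideanSpace ℝ (Fin N × Fin N) :=
    (EuclideanSpace.equiv (Fin N × Fin N) ℝ).symm
  set WE : ℝ → EuclideanSpace ℝ (Fin N × Fin N) :=
    fun s => L (fun p => W s p.1 p.2) with hWEdef
  have happ : ∀ (v : Fin N × Fin N → ℝ) (p : Fin N × Fin N),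
      (L v : EuclideanSpace ℝ (Fin N × Fin N)) p = v p := fun v p => rfl
  have hnorm : ∀ s, ‖WE s‖ = frobNorm N (W s) := by
    intro s
    rw [EuclideanSpace.norm_eq, Fintype.sum_prod_type]
    unfold frobNorm
    congr 1
    refine Finset.sum_congr rfl fun i _ => Finset.sum_congr rfl fun j _ => ?_
    change ‖W s i j‖ ^ 2 = W s i j ^ 2
    rw [Real.norm_eq_abs, sq_abs]
  -- derivative of WE
  have hWE' : ∀ s, HasDerivAt WE
      (L (fun p => -γ * W s p.1 p.2 + η * x s p.1 * x s p.2 * g s)) s := by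
    intro s
    exact (L.toContinuousLinearMap.hasFDerivAt).comp_hasDerivAt s
      (hasDerivAt_pi.mpr fun p => hdyn p.1 p.2 s)
  set c : ℝ → ℝ := fun s => Real.exp (γ * (s - t₀)) with hcdef
  have hc : ∀ s, HasDerivAt c (γ * c s) s := by
    intro s
    have h1 : HasDerivAt (fun s : ℝ => γ * (s - t₀)) (γ * 1) s :=
      ((hasDerivAt_id s).sub_const t₀).const_mul γ
    have := h1.exp
    simpa [hcdef, mul_comm] using this
  have hcpos : ∀ s, 0 < c s := fun s => Real.exp_pos _
  set f : ℝ → EuclideanSpace ℝ (Fin N × Fin N) := fun s => c s • WE s with hfdef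
  set f' : ℝ → EuclideanSpace ℝ (Fin N × Fin N) :=
    fun s => c s • (L (fun p => η * x s p.1 * x s p.2 * g s)) with hf'def
  have hf' : ∀ s, HasDerivAt f (f' s) s := by
    intro s
    have h1 := (hc s).smul (hWE' s)
    refine HasDerivAt.congr_deriv h1 ?_
    have h2 : (L (fun p => -γ * W s p.1 p.2 + η * x s p.1 * x s p.2 * g s))
        = (-γ) • WE s + L (fun p => η * x s p.1 * x s p.2 * g s) := by
      rw [hWEdef, ← map_smul, ← map_add]
      congr 1
    rw [hf'def, h2]
    simp only [smul_add, smul_smul]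
    module
  -- bound on the noise term
  have hnoise : ∀ s, ‖(L (fun p => η * x s p.1 * x s p.2 * g s) :
      EuclideanSpace ℝ (Fin N × Fin N))‖ ≤ γ * R := by
    intro s
    rw [hγR, EuclideanSpace.norm_eq]
    have hNN : (0:ℝ) ≤ η * M ^ 2 * N := by positivity
    rw [show (η * M ^ 2 * N : ℝ) = Real.sqrt ((η * M ^ 2 * N)^2) by
      rw [Real.sqrt_sq hNN]]
    apply Real.sqrt_le_sqrt
    have hterm : ∀ p : Fin N × Fin N,
        ‖(L (fun p => η * x s p.1 * x s p.2 * g s) :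
          EuclideanSpace ℝ (Fin N × Fin N)) p‖ ^ 2 ≤ (η * M ^ 2) ^ 2 := by
      intro p
      have habs : |η * x s p.1 * x s p.2 * g s| ≤ η * M ^ 2 := by
        have h1 := hx p.1 s
        have h2 := hx p.2 s
        have h3 := (hg s).1
        have h4 := (hg s).2
        have he : |η * x s p.1 * x s p.2 * g s|
            = η * (|x s p.1| * |x s p.2| * |g s|) := by
          rw [abs_mul, abs_mul, abs_mul, abs_of_pos hη]; ring
        rw [he]
        have hgabs : |g s| ≤ 1 := abs_le.mpr ⟨by linarith, h4⟩
        have hxx : |x s p.1| * |x s p.2| * |g s| ≤ M * M * 1 := by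
          apply mul_le_mul _ hgabs (abs_nonneg _) (by positivity)
          exact mul_le_mul h1 h2 (abs_nonneg _) hM.le
        nlinarith [hη.le]
      rw [happ, Real.norm_eq_abs]
      exact pow_le_pow_left₀ (abs_nonneg _) habs 2
    calc (∑ p : Fin N × Fin N, ‖(L (fun p => η * x s p.1 * x s p.2 * g s) :
            EuclideanSpace ℝ (Fin N × Fin N)) p‖ ^ 2)
        ≤ ∑ _p : Fin N × Fin N, (η * M ^ 2) ^ 2 :=
          Finset.sum_le_sum fun p _ => hterm p
      _ = (Fintype.card (Fin N × Fin N) : ℝ) * (η * M ^ 2) ^ 2 := by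
          rw [Finset.sum_const, Finset.card_univ, nsmul_eq_mul]
      _ = (η * M ^ 2 * N) ^ 2 := by
          simp only [Fintype.card_prod, Fintype.card_fin]
          push_cast
          ring
  set B : ℝ → ℝ := fun s => c s * R with hBdef
  have hB : ∀ s, HasDerivAt B (γ * c s * R) s := by
    intro s
    simpa [hBdef, mul_comm, mul_assoc] using (hc s).mul_const R
  have ha' : ‖f t₀‖ ≤ B t₀ := by
    have h1 : ‖WE t₀‖ ≤ R := by rw [hnorm]; exact h₀
    show ‖c t₀ • WE t₀‖ ≤ c t₀ * R
    rw [norm_smul, Real.norm_eq_abs, abs_of_pos (hcpos t₀)]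
    exact mul_le_mul_of_nonneg_left h1 (hcpos t₀).le
  have bound' : ∀ s ∈ Set.Ico t₀ t, ‖f' s‖ ≤ γ * c s * R := by
    intro s _
    show ‖c s • (L (fun p => η * x s p.1 * x s p.2 * g s) :
      EuclideanSpace ℝ (Fin N × Fin N))‖ ≤ γ * c s * R
    rw [norm_smul, Real.norm_eq_abs, abs_of_pos (hcpos s)]
    calc c s * ‖(L (fun p => η * x s p.1 * x s p.2 * g s) :
          EuclideanSpace ℝ (Fin N × Fin N))‖
        ≤ c s * (γ * R) := mul_le_mul_of_nonneg_left (hnoise s) (hcpos s).le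
      _ = γ * c s * R := by ring
  have key := image_norm_le_of_norm_deriv_right_le_deriv_boundary
    (f := f) (f' := f') (a := t₀) (b := t) (B := B) (B' := fun s => γ * c s * R)
    (fun s _ => ((hf' s).continuousAt).continuousWithinAt)
    (fun s _ => (hf' s).hasDerivWithinAt)
    ha' hB bound'
  have hk := key (Set.right_mem_Icc.mpr ht)
  have hk2 : c t * ‖WE t‖ ≤ c t * R := by
    have : ‖f t‖ = c t * ‖WE t‖ := by
      show ‖c t • WE t‖ = c t * ‖WE t‖
      rw [norm_smul, Real.norm_eq_abs, abs_of_pos (hcpos t)]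
    rw [this] at hk
    exact hk
  have h2 : ‖WE t‖ ≤ R := le_of_mul_le_mul_left hk2 (hcpos t)
  rw [hnorm] at h2
  exact h2
end
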